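/- arXiv:1006.4149 — 5 statements merged into one kernel-verified Lean document; each statement's English description precedes it below -/
import Mathlib

section
/- Let Φ be a finite list of nonzero elements of Λ and let Y ∈ V be polarizing for Φ. Then for every λ ∈ Λ, Σ_I (−1)^{|I|} · Θ[Φ↑Y](λ − Σ_{φ∈I} φ) equals 1 if λ = 0 and equals 0 otherwise, where I ranges over all sublists of the list Φ (so that the left-hand side is the convolution of Θ[Φ↑Y] with the Fourier coefficients of the finite product Π_{φ∈Φ}(1 − e_φ)). Equivalently, Θ[Φ↑Y] · Π_{φ∈Φ}(1 − e_φ) = 1 as formal characters. -/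
noncomputable section

open Module
open scoped Classical

variable {V : Type*} [NormedAddCommGroup V] [InnerProductSpace ℝ V] [FiniteDimensional ℝ V]

/-- A full-rank lattice: a free `ℤ`-submodule of rank `dim V` that spans `V` over `ℝ`. -/
def IsLattice (Λ : Submodule ℤ V) : Prop :=
  Submodule.span ℝ (Λ : Set V) = ⊤ ∧ Nonempty (Basis (Fin (finrank ℝ V)) ℤ Λ)

/-- Filter a list by a (classical) predicate. -/
def filterP (Φ : List V) (P : V → Prop) : List V :=
  Φ.filter fun v => @decide (P v) (Classical.propDecidable _)

/-- A vector `Y` is polarizing for the list `Φ` if `(φ, Y) ≠ 0` for every entry `φ`. -/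
def Polarizing (Φ : List V) (Y : V) : Prop := ∀ φ ∈ Φ, (inner ℝ φ Y : ℝ) ≠ 0

/-- The partition function `Θ[Φ↑Y] : V → ℤ`. -/
def theta (Φ : List V) (Y : V) (lam : V) : ℤ :=
  (-1 : ℤ) ^ (filterP Φ (fun φ => (inner ℝ φ Y : ℝ) < 0)).length *
    (Set.ncard {n : Fin Φ.length → ℕ |
      ∑ i : Fin Φ.length,
        (if (0 : ℝ) < (inner ℝ (Φ.get i) Y : ℝ) then ((n i : ℤ) • Φ.get i)
         else (-(((n i : ℤ) + 1) • Φ.get i))) = lam} : ℤ)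

/-- Polynomial functions on a real vector space, with values in `ℂ`:
the subalgebra of functions generated by (complexified) real linear functionals. -/
def IsPolyFun {W : Type*} [AddCommGroup W] [Module ℝ W] (p : W → ℂ) : Prop :=
  p ∈ Algebra.adjoin ℂ {g : W → ℂ | ∃ l : W →ₗ[ℝ] ℝ, g = fun w => ((l w : ℝ) : ℂ)}

/-- A function is quasi-polynomial on the lattice `Ξ` if there is a finite-index
sublattice `Ξ₀` such that on every coset `ξ + Ξ₀` of a lattice point `ξ ∈ Ξ`, the function
agrees with a polynomial function. -/
def IsQuasiPoly {W : Type*} [AddCommGroup W] [Module ℝ W] (Ξ : Submodule ℤ W) (f : W → ℂ) :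
    Prop :=
  ∃ Ξ₀ : Submodule ℤ W, Ξ₀ ≤ Ξ ∧ (∃ N : ℕ, 0 < N ∧ ∀ v ∈ Ξ, (N : ℤ) • v ∈ Ξ₀) ∧
    ∀ ξ ∈ Ξ, ∃ p : W → ℂ, IsPolyFun p ∧ ∀ μ ∈ Ξ₀, f (ξ + μ) = p (ξ + μ)

/-- `γ` is `Φ`-regular: it lies in the span of `Φ` and is not a linear combination of fewer
than `dim span Φ` elements of `Φ`. -/
def PhiRegular (Φ : List V) (γ : V) : Prop :=
  γ ∈ Submodule.span ℝ {v | v ∈ Φ} ∧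
    ¬∃ s : Finset V, ↑s ⊆ {v | v ∈ Φ} ∧
      s.card < finrank ℝ (Submodule.span ℝ {v | v ∈ Φ}) ∧ γ ∈ Submodule.span ℝ (s : Set V)

/-- A `Φ`-tope: a connected component of the set of `Φ`-regular elements. -/
def IsTope (Φ : List V) (T : Set V) : Prop :=
  ∃ γ, PhiRegular Φ γ ∧ T = connectedComponentIn {x | PhiRegular Φ x} γ

/-- An alcove for the data `(μ_p, Φ_p)`: a connected component of the set of `γ` such that
`γ - μ p` is `Φ p`-regular for all `p`. -/
def IsAlcove {F : Type*} (μ : F → V) (Φ : F → List V) (A : Set V) : Prop :=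
  ∃ γ, (∀ p, PhiRegular (Φ p) (γ - μ p)) ∧
    A = connectedComponentIn {x | ∀ p, PhiRegular (Φ p) (x - μ p)} γ

/-!
Splitting the solutions counted by `Θ[φ :: Φ↑Y](λ)` according to whether the multiplicity of
`φ` is zero, and lowering it by one otherwise, gives the difference equation
`Θ[φ :: Φ↑Y](λ) - Θ[φ :: Φ↑Y](λ - φ) = Θ[Φ↑Y](λ)`; for `φ ∈ Φ₋` this holds because the sign
`(-1)^{|Φ₋|}` flips. Thus multiplying by `1 - e_φ` removes `φ` from the list, and removing every
entry leaves `Θ[[]↑Y] = δ₀`. Finiteness of the counts, needed to add them, is where the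
polarization enters.
-/

lemma Set.ncard_eq_ncard_zero_add_ncard_succ {T : Type*} {S : Set (ℕ × T)} (hS : S.Finite) :
    S.ncard = {t | (0, t) ∈ S}.ncard + {p : ℕ × T | (p.1 + 1, p.2) ∈ S}.ncard := by
  have hzero : (fun t : T => ((0 : ℕ), t)).Injective := fun _ _ h => (Prod.ext_iff.1 h).2
  have hsucc : (Prod.map Nat.succ id : ℕ × T → ℕ × T).Injective :=
    Nat.succ_injective.prodMap Function.injective_id
  have hsplit : S = (fun t => (0, t)) '' {t | (0, t) ∈ S} ∪
      Prod.map Nat.succ id '' {p : ℕ × T | (p.1 + 1, p.2) ∈ S} := by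
    ext ⟨m, t⟩
    cases m <;> simp
  have hdisj : Disjoint ((fun t => (0, t)) '' {t | (0, t) ∈ S})
      (Prod.map Nat.succ id '' {p : ℕ × T | (p.1 + 1, p.2) ∈ S}) := by
    rw [Set.disjoint_left]
    rintro _ ⟨t, -, rfl⟩ ⟨p, -, h⟩
    exact Nat.succ_ne_zero _ (Prod.ext_iff.1 h).1
  nth_rewrite 1 [hsplit]
  rw [Set.ncard_union_eq hdisj ((hS.preimage hzero.injOn).image _)
      ((hS.preimage hsucc.injOn).image _), Set.ncard_image_of_injective _ hzero,
    Set.ncard_image_of_injective _ hsucc]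

lemma Finset.powerset_map {α β : Type*} (f : α ↪ β) (s : Finset α) :
    (s.map f).powerset = s.powerset.map (Finset.mapEmbedding f).toEmbedding := by
  ext t
  simp [Finset.subset_map_iff, eq_comm]

lemma Fin.sum_univ_finset_succ {M : Type*} [AddCommMonoid M] {n : ℕ}
    (g : Finset (Fin (n + 1)) → M) :
    ∑ I, g I = ∑ J : Finset (Fin n),
      (g (J.map (Fin.succEmb n)) + g (insert 0 (J.map (Fin.succEmb n)))) := by
  rw [← Finset.powerset_univ, Fin.univ_succ, Finset.cons_eq_insert,
    Finset.sum_powerset_insert (by simp), Finset.powerset_map, Finset.sum_map, Finset.sum_map,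
    ← Finset.sum_add_distrib, Finset.powerset_univ]
  rfl

lemma sum_neg_one_pow_card_mul_sub_sum_cons {G R : Type*} [AddCommGroup G] [CommRing R]
    (φ : G) (Φ : List G) (f : G → R) (x : G) :
    ∑ I : Finset (Fin (φ :: Φ).length), (-1) ^ I.card * f (x - ∑ i ∈ I, (φ :: Φ).get i) =
      ∑ J : Finset (Fin Φ.length), (-1) ^ J.card *
        (f (x - ∑ j ∈ J, Φ.get j) - f (x - ∑ j ∈ J, Φ.get j - φ)) := by
  refine (Fin.sum_univ_finset_succ _).trans (Finset.sum_congr rfl fun J _ => ?_)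
  have h0 : (0 : Fin (Φ.length + 1)) ∉ J.map (Fin.succEmb _) := by simp
  simp only [List.length_cons, Finset.card_map, List.get_eq_getElem, Finset.sum_map,
    Fin.coe_succEmb, Fin.val_succ, List.getElem_cons_succ, h0, not_false_eq_true,
    Finset.card_insert_of_notMem, Finset.sum_insert, Fin.coe_ofNat_eq_mod, Nat.zero_mod,
    List.getElem_cons_zero, sub_add_eq_sub_sub_swap]
  ring

section Theta

variable {E : Type*} [NormedAddCommGroup E] [InnerProductSpace ℝ E]

def polarized (Y φ : E) : E := if (0 : ℝ) < (inner ℝ φ Y : ℝ) then φ else -φ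

def polarizedMultiple (Y φ : E) (m : ℕ) : E :=
  if (0 : ℝ) < (inner ℝ φ Y : ℝ) then ((m : ℤ) • φ) else (-(((m : ℤ) + 1) • φ))

lemma polarizedMultiple_succ (Y φ : E) (m : ℕ) :
    polarizedMultiple Y φ (m + 1) = polarizedMultiple Y φ m + polarized Y φ := by
  unfold polarizedMultiple polarized
  split_ifs
  · push_cast; rw [add_smul, one_smul]
  · push_cast; rw [add_smul, add_smul, one_smul]; abel

lemma mul_abs_inner_le_inner_polarizedMultiple (Y φ : E) (m : ℕ) :
    m * |(inner ℝ φ Y : ℝ)| ≤ inner ℝ (polarizedMultiple Y φ m) Y := by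
  unfold polarizedMultiple
  split_ifs with h
  · simp [← Int.cast_smul_eq_zsmul ℝ, real_inner_smul_left, abs_of_pos h]
  · rw [inner_neg_left, ← Int.cast_smul_eq_zsmul ℝ, real_inner_smul_left,
      abs_of_nonpos (not_lt.1 h)]
    push_cast
    nlinarith [not_lt.1 h]

def solutions (Y : E) (Φ : List E) (x : E) : Set (Fin Φ.length → ℕ) :=
  {n | ∑ i, polarizedMultiple Y (Φ.get i) (n i) = x}

lemma cons_mem_solutions_cons_iff (Y φ : E) (Φ : List E) (x : E) (m : ℕ)
    (t : Fin Φ.length → ℕ) :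
    (Fin.cons m t : Fin (Φ.length + 1) → ℕ) ∈ solutions Y (φ :: Φ) x ↔
      t ∈ solutions Y Φ (x - polarizedMultiple Y φ m) := by
  simp [solutions, Fin.sum_univ_succ, eq_sub_iff_add_eq']

lemma Polarizing.of_cons {φ Y : E} {Φ : List E} (hY : Polarizing (φ :: Φ) Y) : Polarizing Φ Y :=
  fun v hv => hY v (List.mem_cons_of_mem _ hv)

lemma solutions_finite {Y : E} {Φ : List E} (hY : Polarizing Φ Y) (x : E) :
    (solutions Y Φ x).Finite := by
  have hpos : ∀ i, 0 < |(inner ℝ (Φ.get i) Y : ℝ)| := fun i =>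
    abs_pos.2 (hY _ (List.get_mem _ _))
  refine (Set.finite_Iic fun i => ⌈inner ℝ x Y / |(inner ℝ (Φ.get i) Y : ℝ)|⌉₊).subset
    fun n hn i => ?_
  have hle : n i * |(inner ℝ (Φ.get i) Y : ℝ)| ≤ inner ℝ x Y := calc
    _ ≤ inner ℝ (polarizedMultiple Y (Φ.get i) (n i)) Y :=
      mul_abs_inner_le_inner_polarizedMultiple _ _ _
    _ ≤ ∑ j, inner ℝ (polarizedMultiple Y (Φ.get j) (n j)) Y :=
      Finset.single_le_sum (fun j _ => (by positivity : (0 : ℝ) ≤ n j * _).trans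
        (mul_abs_inner_le_inner_polarizedMultiple _ _ _)) (Finset.mem_univ i)
    _ = inner ℝ x Y := by rw [← sum_inner, hn]
  exact_mod_cast ((le_div_iff₀ (hpos i)).2 hle).trans (Nat.le_ceil _)

lemma theta_eq_ncard (Φ : List E) (Y x : E) :
    theta Φ Y x = (-1) ^ (filterP Φ fun φ => (inner ℝ φ Y : ℝ) < 0).length *
      ((solutions Y Φ x).ncard : ℤ) := rfl

lemma theta_nil (Y x : E) : theta [] Y x = if x = 0 then 1 else 0 := by
  have : solutions Y [] x = if x = 0 then Set.univ else ∅ := by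
    ext n
    split_ifs with h <;> simp [solutions, h, eq_comm]
  rw [theta_eq_ncard, this]
  split_ifs <;> simp [filterP]

lemma ncard_solutions_cons {Y φ : E} {Φ : List E} (hY : Polarizing (φ :: Φ) Y) (x : E) :
    (solutions Y (φ :: Φ) x).ncard = (solutions Y Φ (x - polarizedMultiple Y φ 0)).ncard +
      (solutions Y (φ :: Φ) (x - polarized Y φ)).ncard := by
  have hpre : ∀ z, Fin.consEquiv (fun _ => ℕ) ⁻¹' solutions Y (φ :: Φ) z =
      {p | p.2 ∈ solutions Y Φ (z - polarizedMultiple Y φ p.1)} := fun z => by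
    ext ⟨m, t⟩
    exact cons_mem_solutions_cons_iff Y φ Φ z m t
  have hncard : ∀ z, (solutions Y (φ :: Φ) z).ncard =
      {p : ℕ × _ | p.2 ∈ solutions Y Φ (z - polarizedMultiple Y φ p.1)}.ncard := fun z => by
    rw [← hpre, Set.ncard_preimage_of_injective_subset_range (Equiv.injective _)
      (by simp)]
  rw [hncard, hncard, Set.ncard_eq_ncard_zero_add_ncard_succ]
  · simp only [polarizedMultiple_succ, sub_add_eq_sub_sub_swap, Set.mem_ofPred_eq,
      Set.ofPred_mem_eq]
  · rw [← hpre]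
    exact (solutions_finite hY x).preimage (Equiv.injective _).injOn

lemma theta_cons_sub_theta_cons {Y φ : E} {Φ : List E} (hY : Polarizing (φ :: Φ) Y) (x : E) :
    theta (φ :: Φ) Y x - theta (φ :: Φ) Y (x - φ) = theta Φ Y x := by
  simp only [theta_eq_ncard, filterP, List.filter_cons]
  rcases (hY φ List.mem_cons_self).lt_or_gt with hneg | hpos
  · -- for `φ ∈ Φ₋` the recursion is read at `x - φ`, and the extra sign turns it around
    have h := ncard_solutions_cons hY (x - φ)
    simp only [polarizedMultiple, polarized, if_neg hneg.not_gt] at h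
    simp [hneg, h, pow_succ]
    ring
  · have h := ncard_solutions_cons hY x
    simp only [polarizedMultiple, polarized, if_pos hpos] at h
    simp [hpos.not_gt, h]
    ring

end Theta

theorem theta_mul_prod_one_sub_general
    (Λ : Submodule ℤ V)
    (Φ : List V)
    (Y : V) (hY : Polarizing Φ Y) :
    ∀ lam ∈ Λ,
      (∑ I : Finset (Fin Φ.length),
          (-1 : ℤ) ^ I.card * theta Φ Y (lam - ∑ i ∈ I, Φ.get i)) =
        if lam = 0 then 1 else 0 := by
  intro lam _
  induction Φ with
  | nil => simp [theta_nil, Finset.univ_unique, Subsingleton.elim default (∅ : Finset (Fin 0))]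
  | cons φ Φ ih =>
    rw [sum_neg_one_pow_card_mul_sub_sum_cons]
    simp only [theta_cons_sub_theta_cons hY]
    exact ih hY.of_cons

/-- `Θ[Φ↑Y] · Π_{φ∈Φ}(1 - e_φ) = 1` as formal characters: the convolution of the partition
function with the Fourier coefficients of `Π(1 - e_φ)` is the delta function at `0`. -/
theorem theta_mul_prod_one_sub
    (Λ : Submodule ℤ V) (hΛ : IsLattice Λ)
    (Φ : List V) (hΦ0 : ∀ φ ∈ Φ, φ ≠ 0) (hΦΛ : ∀ φ ∈ Φ, φ ∈ Λ)
    (Y : V) (hY : Polarizing Φ Y) :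
    ∀ lam ∈ Λ,
      (∑ I : Finset (Fin Φ.length),
          (-1 : ℤ) ^ I.card * theta Φ Y (lam - ∑ i ∈ I, Φ.get i)) =
        if lam = 0 then 1 else 0 :=
  theta_mul_prod_one_sub_general Λ Φ Y hY
end
end

section
/- Let Φ be a finite list of nonzero elements of Λ and let Y ∈ V be polarizing for Φ. Then there is an ε > 0 such that for all X, W ∈ V with ‖W − Y‖ < ε, the series Σ_{λ∈Λ} Θ[Φ↑Y](λ) · e^{i(λ,X) − (λ,W)} converges absolutely (i.e. Σ_{λ∈Λ} |Θ[Φ↑Y](λ)| e^{−(λ,W)} < ∞), and its sum equals Π_{φ∈Φ} (1 − e^{i(φ,X) − (φ,W)})^{−1}. -/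
noncomputable section

open Module

variable {V : Type*} [NormedAddCommGroup V] [InnerProductSpace ℝ V] [FiniteDimensional ℝ V]

/-! For `W` near `Y`, every `φ ∈ Φ` has `(φ, W)` of the same sign as `(φ, Y)`, so
`z_φ = e^{i(φ,X) - (φ,W)}` satisfies `‖z_φ‖ < 1` for `φ ∈ Φ₊` and `‖z_φ‖ > 1` for `φ ∈ Φ₋`.
Expanding `(1 - z)⁻¹ = Σ_{m ≥ 0} z^m`, resp. `(1 - z)⁻¹ = -Σ_{m ≥ 0} z^{-(m+1)}`, and multiplying
these finitely many absolutely convergent series gives a series over `n : Φ → ℕ` whose `n`-th term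
is `(-1)^{|Φ₋|} e^{i(λ,X) - (λ,W)}` with `λ = Σ_{Φ₊} n(φ) φ - Σ_{Φ₋} (n(φ) + 1) φ`.
Grouping the terms by `λ` collects exactly `|Θ[Φ↑Y](λ)|` of them. -/

open scoped RealInnerProductSpace

-- No finiteness of the fibres is needed: on an infinite fibre both `Nat.card` and the `tsum` of a
-- nonzero constant are `0`.
theorem HasSum.nsmul_card_preimage {α β G : Type*} [AddCommGroup G] [UniformSpace G]
    [IsUniformAddGroup G] [CompleteSpace G] [T2Space G] {F : α → β} {h : β → G} {s : G}
    (hs : HasSum (fun a => h (F a)) s) :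
    HasSum (fun b => Nat.card (F ⁻¹' {b}) • h b) s := by
  refine (hs.tsum_fiberwise F).congr_fun fun b => ?_
  rw [← tsum_const]
  exact tsum_congr fun a => congrArg h (Set.mem_singleton_iff.1 a.2).symm

theorem summable_norm_and_hasSum_pi_prod {R κ : Type*} [NormedCommRing R] [CompleteSpace R]
    {k : ℕ} (c : Fin k → κ → R) (hc : ∀ i, Summable fun m => ‖c i m‖) :
    (Summable fun n : Fin k → κ => ‖∏ i, c i (n i)‖) ∧
      HasSum (fun n : Fin k → κ => ∏ i, c i (n i)) (∏ i, ∑' m, c i m) := by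
  induction k with
  | zero => exact ⟨.of_finite, by simp⟩
  | succ k ih =>
    obtain ⟨htail_norm, htail⟩ := ih (fun i => c i.succ) fun i => hc i.succ
    have hhead : Summable fun m => ‖c 0 m‖ := hc 0
    have hcons : ∀ p : κ × (Fin k → κ),
        ∏ i, c i (Fin.consEquiv (fun _ => κ) p i) = c 0 p.1 * ∏ i : Fin k, c i.succ (p.2 i) :=
      fun p => by simp [Fin.prod_univ_succ, Fin.consEquiv]
    rw [← (Fin.consEquiv fun _ => κ).summable_iff, ← (Fin.consEquiv fun _ => κ).hasSum_iff]
    simp only [Function.comp_def, hcons]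
    rw [Fin.prod_univ_succ, ← htail.tsum_eq, tsum_mul_tsum_of_summable_norm hhead htail_norm]
    have hprod_norm := hhead.mul_norm htail_norm
    have hprod := summable_mul_of_summable_norm hhead htail_norm
    exact ⟨hprod_norm, hprod.hasSum⟩

section

variable {E : Type*} [NormedAddCommGroup E] [InnerProductSpace ℝ E]

def expChar (X W : E) : AddChar E ℂ where
  toFun v := Complex.exp (Complex.I * ((⟪v, X⟫ : ℝ) : ℂ) - ((⟪v, W⟫ : ℝ) : ℂ))
  map_zero_eq_one' := by simp
  map_add_eq_mul' u v := by
    rw [← Complex.exp_add, inner_add_left, inner_add_left]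
    push_cast
    ring_nf

lemma expChar_apply (X W v : E) :
    expChar X W v = Complex.exp (Complex.I * ((⟪v, X⟫ : ℝ) : ℂ) - ((⟪v, W⟫ : ℝ) : ℂ)) := rfl

lemma norm_expChar (X W v : E) : ‖expChar X W v‖ = Real.exp (-⟪v, W⟫) := by
  simp [expChar_apply, Complex.norm_exp]

lemma expChar_sum {ι : Type*} (X W : E) (s : Finset ι) (v : ι → E) :
    expChar X W (∑ i ∈ s, v i) = ∏ i ∈ s, expChar X W (v i) := by
  simp only [expChar_apply, sum_inner, Complex.ofReal_sum, Finset.mul_sum,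
    ← Finset.sum_sub_distrib, Complex.exp_sum]

def polarSign (Y φ : E) : ℂ := if ⟪φ, Y⟫ < 0 then -1 else 1

def polarTerm (Y φ : E) (m : ℕ) : E :=
  if 0 < ⟪φ, Y⟫ then (m : ℤ) • φ else -(((m : ℤ) + 1) • φ)

def polarSum (Y : E) (Φ : List E) (n : Fin Φ.length → ℕ) : E :=
  ∑ i, polarTerm Y (Φ.get i) (n i)

lemma polarSum_mem {Λ : Submodule ℤ E} {Φ : List E} (hΦΛ : ∀ φ ∈ Φ, φ ∈ Λ) (Y : E)
    (n : Fin Φ.length → ℕ) : polarSum Y Φ n ∈ Λ := by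
  refine Λ.sum_mem fun i _ => ?_
  have hφ := hΦΛ _ (Φ.get_mem i)
  unfold polarTerm
  split_ifs
  exacts [Λ.smul_mem _ hφ, Λ.neg_mem (Λ.smul_mem _ hφ)]

lemma theta_eq_neg_one_pow_mul_ncard (Φ : List E) (Y lam : E) :
    theta Φ Y lam = (-1) ^ (filterP Φ (⟪·, Y⟫ < 0)).length * {n | polarSum Y Φ n = lam}.ncard :=
  rfl

lemma prod_polarSign (Y : E) (Φ : List E) :
    ∏ i : Fin Φ.length, polarSign Y (Φ.get i) = (-1) ^ (filterP Φ (⟪·, Y⟫ < 0)).length := by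
  change ∏ i : Fin Φ.length, polarSign Y Φ[i.1] = _
  rw [Fin.prod_univ_fun_getElem Φ (polarSign Y)]
  change (Φ.map fun φ => if ⟪φ, Y⟫ < 0 then (-1 : ℂ) else 1).prod = _
  simp [List.prod_map_ite, filterP]

lemma prod_polarSign_mul_expChar (X W Y : E) (Φ : List E) (n : Fin Φ.length → ℕ) :
    ∏ i, polarSign Y (Φ.get i) * expChar X W (polarTerm Y (Φ.get i) (n i)) =
      (-1) ^ (filterP Φ (⟪·, Y⟫ < 0)).length * expChar X W (polarSum Y Φ n) := by
  rw [Finset.prod_mul_distrib, prod_polarSign, polarSum, expChar_sum]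

lemma hasSum_polarSign_mul_expChar (X W : E) {Y φ : E} (hφ : 0 < ⟪φ, W⟫ * ⟪φ, Y⟫) :
    (Summable fun m => ‖polarSign Y φ * expChar X W (polarTerm Y φ m)‖) ∧
      HasSum (fun m => polarSign Y φ * expChar X W (polarTerm Y φ m)) (1 - expChar X W φ)⁻¹ := by
  set z := expChar X W φ
  rcases pos_and_pos_or_neg_and_neg_of_mul_pos hφ with ⟨hW, hY⟩ | ⟨hW, hY⟩
  · have hz : ‖z‖ < 1 := by simpa [z, norm_expChar] using hW
    have hterm : ∀ m, polarSign Y φ * expChar X W (polarTerm Y φ m) = z ^ m := fun m => by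
      simp [polarSign, polarTerm, hY, hY.not_gt, z, AddChar.map_nsmul_eq_pow]
    simp only [hterm, norm_pow]
    exact ⟨summable_geometric_of_lt_one (norm_nonneg z) hz, hasSum_geometric_of_norm_lt_one hz⟩
  · have hz : ‖z⁻¹‖ < 1 := by
      rwa [norm_inv, norm_expChar, ← Real.exp_neg, neg_neg, Real.exp_lt_one_iff]
    have hz0 : z ≠ 0 := Complex.exp_ne_zero _
    have hterm : ∀ m, polarSign Y φ * expChar X W (polarTerm Y φ m) = -z⁻¹ * z⁻¹ ^ m :=
      fun m => by
        simp [polarSign, polarTerm, hY, hY.not_gt, z, AddChar.map_neg_eq_inv,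
          AddChar.map_zsmul_eq_zpow]
        rw [zpow_add_one₀ hz0, zpow_natCast]
        ring
    simp only [hterm, norm_mul, norm_pow]
    refine ⟨(summable_geometric_of_lt_one (norm_nonneg _) hz).mul_left _, ?_⟩
    have hsum : -z⁻¹ * (1 - z⁻¹)⁻¹ = (1 - z)⁻¹ := by
      rw [neg_mul, ← mul_inv, mul_sub, mul_one, mul_inv_cancel₀ hz0, ← inv_neg, neg_sub]
    exact hsum ▸ (hasSum_geometric_of_norm_lt_one hz).mul_left (-z⁻¹)

lemma hasSum_expChar_polarSum (X W : E) {Y : E} {Φ : List E}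
    (hΦ : ∀ φ ∈ Φ, 0 < ⟪φ, W⟫ * ⟪φ, Y⟫) :
    (Summable fun n => Real.exp (-⟪polarSum Y Φ n, W⟫)) ∧
      HasSum (fun n => (-1) ^ (filterP Φ (⟪·, Y⟫ < 0)).length * expChar X W (polarSum Y Φ n))
        (Φ.map fun φ => (1 - expChar X W φ)⁻¹).prod := by
  have hfactor := fun i : Fin Φ.length => hasSum_polarSign_mul_expChar X W (hΦ _ (Φ.get_mem i))
  obtain ⟨hnorm, hsum⟩ := summable_norm_and_hasSum_pi_prod _ fun i => (hfactor i).1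
  simp only [prod_polarSign_mul_expChar, norm_mul, norm_pow, norm_neg, norm_one, one_pow,
    one_mul, norm_expChar, fun i => (hfactor i).2.tsum_eq] at hnorm hsum
  refine ⟨hnorm, ?_⟩
  rwa [← Fin.prod_univ_fun_getElem]

lemma eventually_forall_inner_mul_pos {Φ : List E} {Y : E} (hY : Polarizing Φ Y) :
    ∀ᶠ W in nhds Y, ∀ φ ∈ Φ, 0 < ⟪φ, W⟫ * ⟪φ, Y⟫ := by
  refine (Filter.eventually_all_finite Φ.finite_toSet).2 fun φ hφ => ?_
  have hcont : Continuous fun W => ⟪φ, W⟫ * ⟪φ, Y⟫ := by fun_prop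
  exact continuousAt_const.eventually_lt hcont.continuousAt (mul_self_pos.2 (hY φ hφ))

end

theorem theta_series_converges_general
    (Λ : Submodule ℤ V)
    (Φ : List V) (hΦΛ : ∀ φ ∈ Φ, φ ∈ Λ)
    (Y : V) (hY : Polarizing Φ Y) :
    ∃ ε : ℝ, 0 < ε ∧ ∀ X W : V, ‖W - Y‖ < ε →
      Summable (fun lam : Λ =>
        (|theta Φ Y (lam : V)| : ℝ) * Real.exp (-(inner ℝ (lam : V) W : ℝ))) ∧
      (∑' lam : Λ, (theta Φ Y (lam : V) : ℂ) *
          Complex.exp (Complex.I * ((inner ℝ (lam : V) X : ℝ) : ℂ) -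
            ((inner ℝ (lam : V) W : ℝ) : ℂ))) =
        (Φ.map (fun φ =>
          (1 - Complex.exp (Complex.I * ((inner ℝ φ X : ℝ) : ℂ) -
            ((inner ℝ φ W : ℝ) : ℂ)))⁻¹)).prod := by
  obtain ⟨ε, hε, hsign⟩ := Metric.eventually_nhds_iff.1 (eventually_forall_inner_mul_pos hY)
  refine ⟨ε, hε, fun X W hW => ?_⟩
  obtain ⟨hnorm, hsum⟩ := hasSum_expChar_polarSum X W (hsign (by rwa [dist_eq_norm]))
  let F : (Fin Φ.length → ℕ) → Λ := fun n => ⟨polarSum Y Φ n, polarSum_mem hΦΛ Y n⟩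
  have hfiber (lam : Λ) : Nat.card (F ⁻¹' {lam}) = {n | polarSum Y Φ n = lam}.ncard := by
    simp only [F, Set.preimage, Set.mem_singleton_iff, Subtype.ext_iff, Nat.card_coe_set_eq]
  constructor
  · refine (hnorm.hasSum.nsmul_card_preimage (F := F)
      (h := fun lam : Λ => Real.exp (-⟪(lam : V), W⟫))).summable.congr fun lam => ?_
    rw [hfiber, nsmul_eq_mul, theta_eq_neg_one_pow_mul_ncard]
    simp [abs_mul]
  · refine ((hsum.nsmul_card_preimage (F := F)
      (h := fun lam : Λ => (-1) ^ (filterP Φ (⟪·, Y⟫ < 0)).length * expChar X W lam)).congr_fun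
        fun lam => ?_).tsum_eq
    rw [hfiber, nsmul_eq_mul, theta_eq_neg_one_pow_mul_ncard, expChar_apply]
    push_cast
    ring

/-- Near `exp(iY)`, the series of exponentials with coefficients `Θ[Φ↑Y]` converges
absolutely to `Π_{φ∈Φ}(1 - e^{i(φ,X)-(φ,W)})⁻¹`. -/
theorem theta_series_converges
    (Λ : Submodule ℤ V) (hΛ : IsLattice Λ)
    (Φ : List V) (hΦ0 : ∀ φ ∈ Φ, φ ≠ 0) (hΦΛ : ∀ φ ∈ Φ, φ ∈ Λ)
    (Y : V) (hY : Polarizing Φ Y) :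
    ∃ ε : ℝ, 0 < ε ∧ ∀ X W : V, ‖W - Y‖ < ε →
      Summable (fun lam : Λ =>
        (|theta Φ Y (lam : V)| : ℝ) * Real.exp (-(inner ℝ (lam : V) W : ℝ))) ∧
      (∑' lam : Λ, (theta Φ Y (lam : V) : ℂ) *
          Complex.exp (Complex.I * ((inner ℝ (lam : V) X : ℝ) : ℂ) -
            ((inner ℝ (lam : V) W : ℝ) : ℂ))) =
        (Φ.map (fun φ =>
          (1 - Complex.exp (Complex.I * ((inner ℝ φ X : ℝ) : ℂ) -
            ((inner ℝ φ W : ℝ) : ℂ)))⁻¹)).prod :=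
  theta_series_converges_general Λ Φ hΦΛ Y hY

end
end

section
/- Let Φ be a finite list of nonzero elements of Λ, let Y ∈ V satisfy (φ, Y) ≠ 0 for every φ ∈ Φ, and let f : Λ → ℤ be a function whose support is contained in a half-space {λ ∈ V : (λ, Y) ≥ c} for some c ∈ ℝ. If Σ_I (−1)^{|I|} f(λ − Σ_{φ∈I} φ) = 0 for every λ ∈ Λ, where I ranges over all sublists of Φ, then f is identically zero. In other words, multiplication by the finite product Π_{φ∈Φ}(1 − e_φ) is injective on the space of formal characters supported on a half-space bounded by a hyperplane orthogonal to Y. -/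
/-!
Write `Δ_φ f (λ) = f(λ) - f(λ - φ)`. The alternating sum over sublists of `Φ` is the iterated
difference `Δ_{φ₁} ⋯ Δ_{φₙ} f`, and each `Δ_φ` keeps the support inside some half-space
`{(λ, Y) ≥ c'}`. By induction on `Φ` it therefore suffices to treat a single `φ`: if
`Δ_φ f = 0` then `f` is `φ`-periodic, and since `(φ, Y) ≠ 0`, translating a point of the
support by a large multiple of `±φ` leaves the half-space.
-/

noncomputable section

open Module

variable {V : Type*} [NormedAddCommGroup V] [InnerProductSpace ℝ V] [FiniteDimensional ℝ V]

open Finset Function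

section

variable {G R ι : Type*} [AddCommGroup G]

/-- Convolution of `f` with `∏_{i ∈ s} (1 - e_{v i})`. -/
def convProdOneSub [Ring R] (s : Finset ι) (v : ι → G) (f : G → R) (x : G) : R :=
  ∑ I ∈ s.powerset, (-1) ^ I.card * f (x - ∑ i ∈ I, v i)

lemma convProdOneSub_empty [Ring R] (v : ι → G) (f : G → R) : convProdOneSub ∅ v f = f := by
  ext x
  simp [convProdOneSub]

lemma convProdOneSub_insert [Ring R] [DecidableEq ι] {s : Finset ι} {a : ι} (ha : a ∉ s)
    (v : ι → G) (f : G → R) :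
    convProdOneSub (insert a s) v f = convProdOneSub s v (fun x => f x - f (x - v a)) := by
  ext x
  simp only [convProdOneSub, mul_sub, sum_sub_distrib]
  rw [sum_powerset_insert ha, sub_eq_add_neg, ← sum_neg_distrib]
  congr 1
  refine sum_congr rfl fun I hI => ?_
  have haI : a ∉ I := fun h => ha (mem_powerset.mp hI h)
  rw [card_insert_of_notMem haI, sum_insert haI, pow_succ, mul_neg_one, neg_mul,
    sub_add_eq_sub_sub_swap]

lemma bddBelow_image_support_sub_comp_sub [AddGroup R] {f : G → R} {h : G →+ ℝ}
    (hf : BddBelow (h '' support f)) (a : G) :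
    BddBelow (h '' support fun x => f x - f (x - a)) := by
  obtain ⟨c, hc⟩ := hf
  refine ⟨min c (c + h a), ?_⟩
  rintro _ ⟨x, hx, rfl⟩
  by_cases hfx : f x = 0
  · have hfxa : f (x - a) ≠ 0 := fun h0 => hx (by simp [hfx, h0])
    have := hc ⟨x - a, hfxa, rfl⟩
    rw [map_sub] at this
    exact min_le_of_right_le (by linarith)
  · exact min_le_of_left_le (hc ⟨x, hfx, rfl⟩)

lemma Function.Periodic.eq_zero_of_bddBelow_image_support [Zero R] {f : G → R} {a : G}
    (hper : Periodic f a) {h : G →+ ℝ} (ha : h a ≠ 0) (hf : BddBelow (h '' support f)) :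
    f = 0 := by
  wlog ha_pos : 0 < h a generalizing a
  · exact this hper.neg (by simpa using ha) (by simpa using ha.lt_of_le (not_lt.mp ha_pos))
  obtain ⟨c, hc⟩ := hf
  ext x
  by_contra hfx
  obtain ⟨n, hn⟩ := exists_nat_gt ((h x - c) / h a)
  have hmem : f (x - n • a) ≠ 0 := by rwa [hper.sub_nsmul_eq n]
  have := hc ⟨x - n • a, hmem, rfl⟩
  rw [map_sub, map_nsmul, nsmul_eq_mul] at this
  rw [div_lt_iff₀ ha_pos] at hn
  linarith

theorem eq_zero_of_convProdOneSub_eq_zero [Ring R] {s : Finset ι} {v : ι → G} {h : G →+ ℝ}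
    (hv : ∀ i ∈ s, h (v i) ≠ 0) {f : G → R} (hf : BddBelow (h '' support f))
    (hconv : convProdOneSub s v f = 0) : f = 0 := by
  classical
  induction s using Finset.induction_on generalizing f with
  | empty => rwa [convProdOneSub_empty] at hconv
  | insert a s ha ih =>
    rw [convProdOneSub_insert ha] at hconv
    have hdiff := ih (fun i hi => hv i (mem_insert_of_mem hi))
      (bddBelow_image_support_sub_comp_sub hf (v a)) hconv
    have hper : Periodic f (v a) := fun x => by
      simpa [sub_eq_zero] using congrFun hdiff (x + v a)
    exact hper.eq_zero_of_bddBelow_image_support (hv a (mem_insert_self a s)) hf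

end

theorem eq_zero_of_halfspace_support_of_conv_eq_zero_general
    (Λ : Submodule ℤ V)
    (Φ : List V) (hΦΛ : ∀ φ ∈ Φ, φ ∈ Λ)
    (Y : V) (hY : ∀ φ ∈ Φ, (inner ℝ φ Y : ℝ) ≠ 0)
    (f : V → ℤ) (c : ℝ)
    (hsupp : ∀ lam ∈ Λ, f lam ≠ 0 → c ≤ (inner ℝ lam Y : ℝ))
    (hconv : ∀ lam ∈ Λ,
      (∑ I : Finset (Fin Φ.length),
        (-1 : ℤ) ^ I.card * f (lam - ∑ i ∈ I, Φ.get i)) = 0) :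
    ∀ lam ∈ Λ, f lam = 0 := by
  let height : Λ →+ ℝ :=
    AddMonoidHom.mk' (fun x => inner ℝ (x : V) Y) fun x y => by simp [inner_add_left]
  let v : Fin Φ.length → Λ := fun i => ⟨Φ.get i, hΦΛ _ (List.get_mem _ _)⟩
  have hzero : (fun x : Λ => f x) = 0 := by
    refine eq_zero_of_convProdOneSub_eq_zero (s := univ) (v := v) (h := height)
      (fun i _ => hY _ (List.get_mem _ _)) ⟨c, ?_⟩ ?_
    · rintro _ ⟨x, hx, rfl⟩
      exact hsupp x x.2 hx
    · ext x
      simpa [convProdOneSub, v] using hconv x x.2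
  exact fun lam hlam => congrFun hzero ⟨lam, hlam⟩

/-- Multiplication by `Π_{φ∈Φ}(1 - e_φ)` is injective on formal characters supported on a
half-space `{(λ, Y) ≥ c}` bounded by a hyperplane orthogonal to `Y`. -/
theorem eq_zero_of_halfspace_support_of_conv_eq_zero
    (Λ : Submodule ℤ V) (hΛ : IsLattice Λ)
    (Φ : List V) (hΦ0 : ∀ φ ∈ Φ, φ ≠ 0) (hΦΛ : ∀ φ ∈ Φ, φ ∈ Λ)
    (Y : V) (hY : ∀ φ ∈ Φ, (inner ℝ φ Y : ℝ) ≠ 0)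
    (f : V → ℤ) (c : ℝ)
    (hsupp : ∀ lam ∈ Λ, f lam ≠ 0 → c ≤ (inner ℝ lam Y : ℝ))
    (hconv : ∀ lam ∈ Λ,
      (∑ I : Finset (Fin Φ.length),
        (-1 : ℤ) ^ I.card * f (lam - ∑ i ∈ I, Φ.get i)) = 0) :
    ∀ lam ∈ Λ, f lam = 0 :=
  eq_zero_of_halfspace_support_of_conv_eq_zero_general Λ Φ hΦΛ Y hY f c hsupp hconv

end
end

section
/- Let Φ be a finite list of nonzero elements of Λ, let Y ∈ V be polarizing for Φ, and let φ₀ be an entry of Φ. Denote by Φ − {φ₀} the list obtained from Φ by decreasing the multiplicity of φ₀ by one. Then for every λ ∈ Λ, Θ[Φ↑Y](λ) − Θ[Φ↑Y](λ − φ₀) = Θ[(Φ − {φ₀})↑Y](λ); that is, (1 − e_{φ₀}) · Θ[Φ↑Y] = Θ[(Φ − {φ₀})↑Y] as formal characters. -/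
/-!
Split the solutions `n` counted by `Θ[φ₀ :: Φ'↑Y](μ)` according to whether `n(φ₀) = 0`.
Those with `n(φ₀) = 0` are the solutions for `Φ'` at `μ` if `(φ₀, Y) > 0`, at `μ + φ₀` if
`(φ₀, Y) < 0`; lowering `n(φ₀)` by one matches the others with the solutions for `φ₀ :: Φ'` at
`μ - φ₀`, resp. `μ + φ₀`. Both cases give `Θ(λ) - Θ(λ - φ₀) = Θ'(λ)`, the extra sign for
`(φ₀, Y) < 0` making up for the reversed roles of `λ` and `λ - φ₀`. Finally `Θ` is invariant
under permuting `Φ`, so `φ₀` may be taken to be its head.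
-/

noncomputable section

open Module

variable {V : Type*} [NormedAddCommGroup V] [InnerProductSpace ℝ V] [FiniteDimensional ℝ V]

theorem List.Perm.exists_equiv_get {α : Type*} {l₁ l₂ : List α} (h : l₁.Perm l₂) :
    ∃ e : Fin l₁.length ≃ Fin l₂.length, l₁.get = l₂.get ∘ e := by
  induction h with
  | nil => exact ⟨Equiv.refl _, rfl⟩
  | cons x _ ih =>
    obtain ⟨e, he⟩ := ih
    refine ⟨(finSuccEquiv _).trans ((Equiv.optionCongr e).trans (finSuccEquiv _).symm), ?_⟩
    funext i
    cases i using Fin.cases with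
    | zero => simp
    | succ j => simpa using congrFun he j
  | swap x y l =>
    refine ⟨Equiv.swap ⟨0, by simp⟩ ⟨1, by simp⟩, ?_⟩
    funext i
    rcases i with ⟨_ | _ | j, hj⟩ <;> simp [Equiv.swap_apply_def, Fin.ext_iff]
  | trans _ _ ih₁ ih₂ =>
    obtain ⟨e₁, he₁⟩ := ih₁
    obtain ⟨e₂, he₂⟩ := ih₂
    exact ⟨e₁.trans e₂, by rw [he₁, he₂]; rfl⟩

open scoped InnerProductSpace

section ThetaSolutions

variable {E ι : Type*} [NormedAddCommGroup E] [InnerProductSpace ℝ E] [Fintype ι]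

def thetaTerm (Y v : E) (m : ℕ) : E :=
  if (0 : ℝ) < ⟪v, Y⟫_ℝ then (m : ℤ) • v else -(((m : ℤ) + 1) • v)

def thetaStep (Y v : E) : E :=
  if (0 : ℝ) < ⟪v, Y⟫_ℝ then v else -v

def thetaSolutions (v : ι → E) (Y μ : E) : Set (ι → ℕ) :=
  {n | ∑ i, thetaTerm Y (v i) (n i) = μ}

theorem thetaTerm_succ (Y v : E) (m : ℕ) :
    thetaTerm Y v (m + 1) = thetaTerm Y v m + thetaStep Y v := by
  unfold thetaTerm thetaStep
  split_ifs <;> module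

theorem mul_abs_inner_le_inner_thetaTerm (Y v : E) (m : ℕ) :
    m * |⟪v, Y⟫_ℝ| ≤ ⟪thetaTerm Y v m, Y⟫_ℝ := by
  unfold thetaTerm
  split_ifs with h
  · simp [← Int.cast_smul_eq_zsmul ℝ, real_inner_smul_left, abs_of_pos h]
  · simp only [inner_neg_left, ← Int.cast_smul_eq_zsmul ℝ, real_inner_smul_left,
      abs_of_nonpos (not_lt.1 h)]
    push_cast
    nlinarith [not_lt.1 h]

theorem thetaSolutions_finite {v : ι → E} {Y : E} (hv : ∀ i, ⟪v i, Y⟫_ℝ ≠ 0) (μ : E) :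
    (thetaSolutions v Y μ).Finite := by
  classical
  refine (Set.finite_Iic fun i => ⌈⟪μ, Y⟫_ℝ / |⟪v i, Y⟫_ℝ|⌉₊).subset fun n hn i => ?_
  have hn : ∑ j, thetaTerm Y (v j) (n j) = μ := hn
  have hbound : n i * |⟪v i, Y⟫_ℝ| ≤ ⟪μ, Y⟫_ℝ :=
    calc n i * |⟪v i, Y⟫_ℝ|
        ≤ ⟪thetaTerm Y (v i) (n i), Y⟫_ℝ := mul_abs_inner_le_inner_thetaTerm Y (v i) (n i)
      _ ≤ ∑ j, ⟪thetaTerm Y (v j) (n j), Y⟫_ℝ :=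
          Finset.single_le_sum (fun j _ => (by positivity : (0 : ℝ) ≤ n j * |⟪v j, Y⟫_ℝ|).trans
            (mul_abs_inner_le_inner_thetaTerm Y (v j) (n j))) (Finset.mem_univ i)
      _ = ⟪μ, Y⟫_ℝ := by rw [← sum_inner, hn]
  exact_mod_cast ((le_div_iff₀ (abs_pos.2 (hv i))).2 hbound).trans (Nat.le_ceil _)

theorem ncard_thetaSolutions_comp_equiv {κ : Type*} [Fintype κ] (e : ι ≃ κ) (v : κ → E)
    (Y μ : E) : (thetaSolutions (v ∘ e) Y μ).ncard = (thetaSolutions v Y μ).ncard :=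
  Set.ncard_congr' <| (e.arrowCongr (Equiv.refl ℕ)).subtypeEquiv fun n => by
    simp [thetaSolutions, ← e.sum_comp]

theorem sum_thetaTerm_add_single [DecidableEq ι] (v : ι → E) (Y : E) (n : ι → ℕ) (i₀ : ι) :
    ∑ i, thetaTerm Y (v i) ((n + Pi.single i₀ 1 : ι → ℕ) i) =
      ∑ i, thetaTerm Y (v i) (n i) + thetaStep Y (v i₀) := by
  have h : ∀ i, thetaTerm Y (v i) ((n + Pi.single i₀ 1 : ι → ℕ) i) =
      thetaTerm Y (v i) (n i) + (Pi.single i₀ (thetaStep Y (v i₀)) : ι → E) i := by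
    intro i
    rcases eq_or_ne i i₀ with rfl | hi
    · simp [thetaTerm_succ]
    · simp [hi]
  simp only [h, Finset.sum_add_distrib, Finset.sum_pi_single', Finset.mem_univ, if_true]

theorem thetaSolutions_sdiff_eq_image_add_single [DecidableEq ι] (v : ι → E) (Y μ : E)
    (i₀ : ι) :
    thetaSolutions v Y μ \ {n | n i₀ = 0} =
      (· + Pi.single i₀ 1) '' thetaSolutions v Y (μ - thetaStep Y (v i₀)) := by
  ext n
  simp only [thetaSolutions, Set.mem_sdiff, Set.mem_ofPred_eq, Set.mem_image]
  constructor
  · rintro ⟨hn, h0⟩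
    have hle : Pi.single i₀ 1 ≤ n := fun i => by
      rcases eq_or_ne i i₀ with rfl | hi
      · simpa [Nat.one_le_iff_ne_zero] using h0
      · simp [hi]
    refine ⟨n - Pi.single i₀ 1, ?_, tsub_add_cancel_of_le hle⟩
    rw [eq_sub_iff_add_eq, ← sum_thetaTerm_add_single, tsub_add_cancel_of_le hle, hn]
  · rintro ⟨m, hm, rfl⟩
    exact ⟨by rw [sum_thetaTerm_add_single, hm, sub_add_cancel], by simp⟩

theorem thetaSolutions_inter_eq_image_cons {k : ℕ} (v : Fin (k + 1) → E) (Y μ : E) :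
    thetaSolutions v Y μ ∩ {n | n 0 = 0} =
      Fin.cons 0 '' thetaSolutions (Fin.tail v) Y (μ - thetaTerm Y (v 0) 0) := by
  ext n
  simp only [thetaSolutions, Set.mem_inter_iff, Set.mem_ofPred_eq, Set.mem_image,
    Fin.sum_univ_succ, Fin.tail]
  constructor
  · rintro ⟨hn, h0⟩
    refine ⟨Fin.tail n, ?_, by rw [← h0]; exact Fin.cons_self_tail n⟩
    simp [← hn, h0, Fin.tail]
  · rintro ⟨m, hm, rfl⟩
    simp only [Fin.cons_zero, Fin.cons_succ, hm, add_sub_cancel, and_self]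

theorem ncard_thetaSolutions_fin_succ {k : ℕ} {v : Fin (k + 1) → E} {Y : E}
    (hv : ∀ i, ⟪v i, Y⟫_ℝ ≠ 0) (μ : E) :
    (thetaSolutions v Y μ).ncard =
      (thetaSolutions (Fin.tail v) Y (μ - thetaTerm Y (v 0) 0)).ncard +
        (thetaSolutions v Y (μ - thetaStep Y (v 0))).ncard := by
  rw [← Set.ncard_inter_add_ncard_sdiff_eq_ncard _ {n | n 0 = 0} (thetaSolutions_finite hv μ),
    thetaSolutions_inter_eq_image_cons, thetaSolutions_sdiff_eq_image_add_single,
    Set.ncard_image_of_injective _ (Fin.cons_right_injective 0),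
    Set.ncard_image_of_injective _ (add_left_injective _)]

theorem theta_eq (Φ : List E) (Y lam : E) :
    theta Φ Y lam = (-1 : ℤ) ^ (filterP Φ fun φ => ⟪φ, Y⟫_ℝ < 0).length *
      ((thetaSolutions Φ.get Y lam).ncard : ℤ) :=
  rfl

theorem theta_perm {Φ Ψ : List E} (h : Φ.Perm Ψ) (Y lam : E) :
    theta Φ Y lam = theta Ψ Y lam := by
  obtain ⟨e, he⟩ := h.exists_equiv_get
  rw [theta_eq, theta_eq, he, ncard_thetaSolutions_comp_equiv, filterP, filterP,
    (h.filter _).length_eq]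

theorem one_sub_mul_theta_cons (φ₀ : E) (Φ' : List E) {Y : E} (hY : Polarizing (φ₀ :: Φ') Y)
    (lam : E) : theta (φ₀ :: Φ') Y lam - theta (φ₀ :: Φ') Y (lam - φ₀) = theta Φ' Y lam := by
  have hsplit (μ : E) : (thetaSolutions (φ₀ :: Φ').get Y μ).ncard =
      (thetaSolutions Φ'.get Y (μ - thetaTerm Y φ₀ 0)).ncard +
        (thetaSolutions (φ₀ :: Φ').get Y (μ - thetaStep Y φ₀)).ncard :=
    ncard_thetaSolutions_fin_succ (fun i => hY _ (List.get_mem _ _)) μ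
  simp only [theta_eq, filterP, List.filter_cons]
  rcases (hY φ₀ List.mem_cons_self).lt_or_gt with hneg | hpos
  · have h := hsplit (lam - φ₀)
    simp only [thetaTerm, thetaStep, not_lt.2 hneg.le, if_false, Nat.cast_zero, zero_add,
      one_smul, sub_neg_eq_add, sub_add_cancel] at h
    simp only [hneg, decide_true, if_true, List.length_cons, h, pow_succ]
    push_cast
    ring
  · have h := hsplit lam
    simp only [thetaTerm, thetaStep, hpos, if_true, Nat.cast_zero, zero_smul, sub_zero] at h
    simp only [not_lt.2 hpos.le, decide_false, Bool.false_eq_true, if_false, h]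
    push_cast
    ring

end ThetaSolutions

theorem one_sub_mul_theta_general
    (Λ : Submodule ℤ V)
    (Φ Φ' : List V) (φ₀ : V) (hperm : Φ.Perm (φ₀ :: Φ'))
    (Y : V) (hY : Polarizing Φ Y) :
    ∀ lam ∈ Λ, theta Φ Y lam - theta Φ Y (lam - φ₀) = theta Φ' Y lam := by
  intro lam _
  rw [theta_perm hperm, theta_perm hperm]
  exact one_sub_mul_theta_cons φ₀ Φ' (fun φ hφ => hY φ (hperm.mem_iff.2 hφ)) lam

/-- `(1 - e_{φ₀}) · Θ[Φ↑Y] = Θ[(Φ - {φ₀})↑Y]`: removing an entry `φ₀` from `Φ` corresponds to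
multiplying the partition function by `1 - e_{φ₀}`. Here `Φ'` denotes the list `Φ` with the
multiplicity of the entry `φ₀` decreased by one, expressed via a permutation. -/
theorem one_sub_mul_theta
    (Λ : Submodule ℤ V) (hΛ : IsLattice Λ)
    (Φ Φ' : List V) (φ₀ : V) (hperm : Φ.Perm (φ₀ :: Φ'))
    (hΦ0 : ∀ φ ∈ Φ, φ ≠ 0) (hΦΛ : ∀ φ ∈ Φ, φ ∈ Λ)
    (Y : V) (hY : Polarizing Φ Y) :
    ∀ lam ∈ Λ, theta Φ Y lam - theta Φ Y (lam - φ₀) = theta Φ' Y lam :=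
  one_sub_mul_theta_general Λ Φ Φ' φ₀ hperm Y hY

end
end

section
/- Let F be a finite set; for each p ∈ F let μ_p ∈ Λ, let Ψ_p be a finite list of elements of Λ, and let Φ_p be a finite list of nonzero elements of Λ spanning V. Let Y ∈ V be polarizing for every Φ_p, let 𝔞 be an alcove for the data (μ_p, Φ_p)_{p∈F}, and for each p let q_p : Λ → ℂ be a quasi-polynomial function coinciding with Θ[Φ_p↑Y] on T(𝔞 − μ_p) ∩ Λ, where T(𝔞 − μ_p) is the Φ_p-tope containing 𝔞 − μ_p. Then for every compact subset 𝔟 ⊂ 𝔞 there exists a positive integer K such that for every integer k > K and every λ ∈ (k·𝔟) ∩ Λ, Σ_{p∈F} Σ_{η∈Ψ_p} q_p(λ − η − kμ_p) = Σ_{p∈F} Σ_{η∈Ψ_p} Θ[Φ_p↑Y](λ − η − kμ_p). -/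
/-! Topes are open cones, so the compact set `𝔟 - μ_p ⊂ T(𝔞 - μ_p)` has a uniform neighbourhood
inside the tope. Writing `λ - η - kμ_p = k (b - μ_p - k⁻¹η)` with `b ∈ 𝔟`, the finitely many
shifts `η` become negligible for large `k`, so every argument lies in `Λ ∩ T(𝔞 - μ_p)`, where
`q_p` and `Θ[Φ_p↑Y]` agree term by term. -/

noncomputable section

open Module
open scoped Pointwise

variable {V : Type*} [NormedAddCommGroup V] [InnerProductSpace ℝ V] [FiniteDimensional ℝ V]

omit [FiniteDimensional ℝ V] in
theorem PhiRegular.smul {Φ : List V} {γ : V} (h : PhiRegular Φ γ) {c : ℝ} (hc : c ≠ 0) :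
    PhiRegular Φ (c • γ) := by
  refine ⟨Submodule.smul_mem _ _ h.1, fun ⟨s, hsΦ, hcard, hcγ⟩ => h.2 ⟨s, hsΦ, hcard, ?_⟩⟩
  simpa [inv_smul_smul₀ hc] using Submodule.smul_mem _ c⁻¹ hcγ

omit [FiniteDimensional ℝ V] in
theorem isOpen_setOf_phiRegular {Φ : List V} (hspan : Submodule.span ℝ {v | v ∈ Φ} = ⊤) :
    IsOpen {x : V | PhiRegular Φ x} := by
  classical
  have hsmall : {s : Finset V | ↑s ⊆ {v | v ∈ Φ} ∧
      s.card < finrank ℝ (Submodule.span ℝ {v | v ∈ Φ})}.Finite :=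
    (Φ.toFinset.powerset.finite_toSet).subset fun s hs => by
      simpa [Finset.subset_iff, Set.subset_def] using hs.1
  have heq : {x : V | PhiRegular Φ x} = ⋂ s ∈ {s : Finset V | ↑s ⊆ {v | v ∈ Φ} ∧
      s.card < finrank ℝ (Submodule.span ℝ {v | v ∈ Φ})},
        ((Submodule.span ℝ (s : Set V) : Set V))ᶜ := by
    ext x
    simp [PhiRegular, hspan]
  rw [heq]
  exact hsmall.isOpen_biInter fun s _ => (Submodule.closed_of_finiteDimensional _).isOpen_compl

omit [FiniteDimensional ℝ V] in
theorem IsTope.isOpen {Φ : List V} {T : Set V} (hT : IsTope Φ T)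
    (hspan : Submodule.span ℝ {v | v ∈ Φ} = ⊤) : IsOpen T := by
  obtain ⟨γ, -, rfl⟩ := hT
  exact (isOpen_setOf_phiRegular hspan).connectedComponentIn

omit [FiniteDimensional ℝ V] in
theorem IsTope.smul_mem {Φ : List V} {T : Set V} (hT : IsTope Φ T) {c : ℝ} (hc : 0 < c)
    {y : V} (hy : y ∈ T) : c • y ∈ T := by
  obtain ⟨γ, -, rfl⟩ := hT
  have hray : (fun t : ℝ => t • y) '' Set.Ioi 0 ⊆ {x | PhiRegular Φ x} := by
    rintro _ ⟨t, ht, rfl⟩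
    exact (connectedComponentIn_subset _ _ hy).smul ht.ne'
  have hyray : y ∈ (fun t : ℝ => t • y) '' Set.Ioi 0 := ⟨1, Set.mem_Ioi.2 one_pos, one_smul ℝ y⟩
  rw [connectedComponentIn_eq hy]
  exact (isPreconnected_Ioi.image _ (continuous_id.smul continuous_const).continuousOn)
    |>.subset_connectedComponentIn hyray hray ⟨c, hc, rfl⟩

theorem eventually_smul_sub_mem_of_isCompact {W : Type*} [NormedAddCommGroup W] [NormedSpace ℝ W]
    {T C S : Set W} (hT : IsOpen T) (hcone : ∀ c : ℝ, 0 < c → ∀ y ∈ T, c • y ∈ T)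
    (hC : IsCompact C) (hCT : C ⊆ T) (hS : Bornology.IsBounded S) :
    ∀ᶠ k : ℝ in Filter.atTop, ∀ x ∈ C, ∀ η ∈ S, k • x - η ∈ T := by
  obtain ⟨ε, hε, hεT⟩ := hC.exists_thickening_subset_open hT hCT
  obtain ⟨M, hM⟩ := hS.exists_norm_le
  filter_upwards [Filter.eventually_gt_atTop 0, Filter.eventually_gt_atTop (M / ε)]
    with k hk hkM x hx η hη
  have hnear : x - k⁻¹ • η ∈ Metric.thickening ε C := by
    refine Metric.mem_thickening_iff.2 ⟨x, hx, ?_⟩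
    rw [dist_eq_norm, sub_sub_cancel_left, norm_neg, norm_smul, norm_inv,
      Real.norm_of_nonneg hk.le, inv_mul_lt_iff₀ hk]
    calc ‖η‖ ≤ M := hM η hη
      _ < k * ε := (div_lt_iff₀ hε).1 hkM
  simpa [smul_sub, hk.ne'] using hcone k hk _ (hεT hnear)

theorem sum_quasiPoly_eq_sum_theta_on_scaled_compact_general
    {F : Type*} [Fintype F]
    (Λ : Submodule ℤ V)
    (μ : F → V) (hμ : ∀ p, μ p ∈ Λ)
    (Ψ : F → List V) (hΨ : ∀ p, ∀ η ∈ Ψ p, η ∈ Λ)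
    (Φ : F → List V)
    (hspan : ∀ p, Submodule.span ℝ {v | v ∈ Φ p} = ⊤)
    (Y : V)
    (A : Set V)
    (T : F → Set V) (hT : ∀ p, IsTope (Φ p) (T p))
    (hTA : ∀ p, ∀ x ∈ A, x - μ p ∈ T p)
    (q : F → V → ℂ)
    (hqT : ∀ p, ∀ lam ∈ (Λ : Set V) ∩ T p, q p lam = (theta (Φ p) Y lam : ℂ))
    (B : Set V) (hB : IsCompact B) (hBA : B ⊆ A) :
    ∃ K : ℕ, 0 < K ∧ ∀ k : ℤ, (K : ℤ) < k → ∀ lam ∈ Λ, lam ∈ (k : ℝ) • B →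
      (∑ p : F, ((Ψ p).map (fun η => q p (lam - η - k • μ p))).sum) =
        ∑ p : F, ((Ψ p).map (fun η => (theta (Φ p) Y (lam - η - k • μ p) : ℂ))).sum := by
  have hlarge : ∀ᶠ k : ℤ in Filter.atTop,
      ∀ p, ∀ x ∈ (· - μ p) '' B, ∀ η ∈ {η | η ∈ Ψ p}, (k : ℝ) • x - η ∈ T p := by
    refine Filter.eventually_all.2 fun p => ?_
    have hreal := eventually_smul_sub_mem_of_isCompact ((hT p).isOpen (hspan p))
      (fun c hc y hy => (hT p).smul_mem hc hy) (hB.image (continuous_sub_right (μ p)))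
      (Set.image_subset_iff.2 fun x hx => hTA p x (hBA hx)) (Ψ p).finite_toSet.isBounded
    exact tendsto_intCast_atTop_atTop.eventually hreal
  obtain ⟨N, hN⟩ := Filter.eventually_atTop.1 hlarge
  refine ⟨N.toNat + 1, Nat.succ_pos _, fun k hk lam hlam ⟨b, hb, hbl⟩ => ?_⟩
  refine Finset.sum_congr rfl fun p _ =>
    congrArg List.sum (List.map_congr_left fun η hη => hqT p _ ⟨?_, ?_⟩)
  · exact sub_mem (sub_mem hlam (hΨ p η hη)) (Submodule.smul_mem _ k (hμ p))
  · have hmem := hN k (by omega) p _ ⟨b, hb, rfl⟩ η hη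
    rwa [smul_sub, sub_right_comm, Int.cast_smul_eq_zsmul ℝ k (μ p),
      show (k : ℝ) • b = lam from hbl] at hmem

/-- Asymptotic agreement: for every compact `𝔟 ⊂ 𝔞` there is `K` such that for `k > K` and
`λ ∈ k𝔟 ∩ Λ`, the sums of shifted quasi-polynomials and shifted partition functions agree. -/
theorem sum_quasiPoly_eq_sum_theta_on_scaled_compact
    {F : Type*} [Fintype F]
    (Λ : Submodule ℤ V) (hΛ : IsLattice Λ)
    (μ : F → V) (hμ : ∀ p, μ p ∈ Λ)
    (Ψ : F → List V) (hΨ : ∀ p, ∀ η ∈ Ψ p, η ∈ Λ)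
    (Φ : F → List V)
    (hΦ0 : ∀ p, ∀ φ ∈ Φ p, φ ≠ 0) (hΦΛ : ∀ p, ∀ φ ∈ Φ p, φ ∈ Λ)
    (hspan : ∀ p, Submodule.span ℝ {v | v ∈ Φ p} = ⊤)
    (Y : V) (hY : ∀ p, Polarizing (Φ p) Y)
    (A : Set V) (hA : IsAlcove μ Φ A)
    (T : F → Set V) (hT : ∀ p, IsTope (Φ p) (T p))
    (hTA : ∀ p, ∀ x ∈ A, x - μ p ∈ T p)
    (q : F → V → ℂ) (hq : ∀ p, IsQuasiPoly Λ (q p))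
    (hqT : ∀ p, ∀ lam ∈ (Λ : Set V) ∩ T p, q p lam = (theta (Φ p) Y lam : ℂ))
    (B : Set V) (hB : IsCompact B) (hBA : B ⊆ A) :
    ∃ K : ℕ, 0 < K ∧ ∀ k : ℤ, (K : ℤ) < k → ∀ lam ∈ Λ, lam ∈ (k : ℝ) • B →
      (∑ p : F, ((Ψ p).map (fun η => q p (lam - η - k • μ p))).sum) =
        ∑ p : F, ((Ψ p).map (fun η => (theta (Φ p) Y (lam - η - k • μ p) : ℂ))).sum :=
  sum_quasiPoly_eq_sum_theta_on_scaled_compact_general Λ μ hμ Ψ hΨ Φ hspan Y A T hT hTA q hqT B hB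
    hBA

end
end
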